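/- arXiv:2002.06005 — 2 statements merged into one kernel-verified Lean document; each statement's English description precedes it below -/
import Mathlib

section
/- For every finite simple graph G with maximum degree Δ ≥ 1, there exists a Δ-regular finite simple graph H containing G as a subgraph with |V(H)| < |V(G)| + 4Δ. -/
/-!
Pad `V` with `m ∈ {4Δ - 4, 4Δ - 3}` isolated vertices, `m` chosen so that `Δ · |W|` is even, and
take a supergraph `H` with all degrees `≤ Δ` and as many edges as possible. If `H` is not
`Δ`-regular, there are vertices `u, v` with room for one more edge each: two distinct deficient
vertices, or (when only one vertex is deficient, whose deficiency is then even) `u = v`.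
Maximality makes `u, v` adjacent, and trading an edge `ay` for `ua, vy` shows that every padding
vertex outside `S = N[u] ∪ N[v]` has all its `Δ` neighbours in `S`. As the degrees in `S` sum to at
most `Δ|S| - 2`, double counting leaves fewer than `|S| ≤ 2Δ - 2` padding vertices outside `S`,
hence fewer than `4Δ - 4` padding vertices altogether.
-/

open Finset

namespace SimpleGraph

variable {W : Type*}

def swapEdge (H : SimpleGraph W) (a y u v : W) : SimpleGraph W :=
  H \ edge a y ⊔ edge u a ⊔ edge v y

def boundedSupergraphs (G₀ : SimpleGraph W) (Δ : ℕ) : Set (SimpleGraph W) :=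
  {H | G₀ ≤ H ∧ ∀ w, (H.neighborSet w).ncard ≤ Δ}

lemma ncard_neighborSet_eq_degree (H : SimpleGraph W) (w : W) [Fintype (H.neighborSet w)] :
    (H.neighborSet w).ncard = H.degree w := by
  rw [Set.ncard_eq_toFinset_card', ← neighborFinset_def, card_neighborFinset_eq_degree]

section EdgeCount

variable [Finite W] {H : SimpleGraph W}

lemma ncard_edgeSet_sup_edge {u v : W} (huv : u ≠ v) (hn : ¬H.Adj u v) :
    (H ⊔ edge u v).edgeSet.ncard = H.edgeSet.ncard + 1 := by
  rw [edgeSet_sup, edgeSet_edge_of_ne huv, Set.union_singleton,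
    Set.ncard_insert_of_notMem (by exact hn)]

lemma ncard_edgeSet_sdiff_edge_add_one {a y : W} (hay : H.Adj a y) :
    (H \ edge a y).edgeSet.ncard + 1 = H.edgeSet.ncard := by
  rw [edgeSet_sdiff, edgeSet_edge_of_ne hay.ne, Set.ncard_sdiff_singleton_add_one (by exact hay)]

lemma ncard_edgeSet_swapEdge {a y u v : W} (hay : H.Adj a y) (hua : ¬H.Adj u a)
    (hvy : ¬H.Adj v y) (hua' : u ≠ a) (hvy' : v ≠ y) (hne : s(u, a) ≠ s(v, y)) :
    (H.swapEdge a y u v).edgeSet.ncard = H.edgeSet.ncard + 1 := by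
  have hvy'' : ¬(H \ edge a y ⊔ edge u a).Adj v y := by
    simp only [sup_adj, sdiff_adj, hvy, false_and, false_or, adj_edge, not_and, not_not]
    exact fun h => (hne h).elim
  rw [swapEdge, ncard_edgeSet_sup_edge hvy' hvy'', ncard_edgeSet_sup_edge hua' (by simp [hua]),
    ← ncard_edgeSet_sdiff_edge_add_one hay]

end EdgeCount

section DegreeCount

variable [DecidableEq W] {H : SimpleGraph W} {Δ : ℕ} {u v : W}

lemma ncard_neighborSet_edge {a y : W} (h : a ≠ y) (w : W) :
    ((edge a y).neighborSet w).ncard = (if w = a then 1 else 0) + (if w = y then 1 else 0) := by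
  by_cases hwa : w = a
  · subst hwa
    have : (edge w y).neighborSet w = {y} := by ext; simp only [mem_neighborSet, edge_adj]; grind
    simp [this, h]
  by_cases hwy : w = y
  · subst hwy
    have : (edge a w).neighborSet w = {a} := by ext; simp only [mem_neighborSet, edge_adj]; grind
    simp [this, hwa]
  have : (edge a y).neighborSet w = ∅ := by ext; simp [edge_adj, hwa, hwy]
  simp [this, hwa, hwy]

lemma ncard_neighborSet_sup_edge_le (H : SimpleGraph W) (huv : u ≠ v) (w : W) :
    ((H ⊔ edge u v).neighborSet w).ncard ≤
      (H.neighborSet w).ncard + (if w = u then 1 else 0) + (if w = v then 1 else 0) := by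
  rw [neighborSet_sup, add_assoc, ← ncard_neighborSet_edge huv]
  exact Set.ncard_union_le _ _

lemma ncard_neighborSet_sdiff_edge_add [Finite W] {a y : W} (hay : H.Adj a y) (w : W) :
    ((H \ edge a y).neighborSet w).ncard + (if w = a then 1 else 0) + (if w = y then 1 else 0) =
      (H.neighborSet w).ncard := by
  have hsub : (edge a y).neighborSet w ⊆ H.neighborSet w := fun x hx =>
    (edge_le_iff (G := H)).2 (.inr hay) hx
  rw [neighborSet_sdiff, add_assoc, ← ncard_neighborSet_edge hay.ne,
    Set.ncard_sdiff_add_ncard_of_subset hsub]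

lemma ncard_neighborSet_swapEdge_le [Finite W] {a y : W} (hay : H.Adj a y) (hua : u ≠ a)
    (hvy : v ≠ y) (w : W) :
    ((H.swapEdge a y u v).neighborSet w).ncard ≤
      (H.neighborSet w).ncard + (if w = u then 1 else 0) + (if w = v then 1 else 0) := by
  have h₁ := ncard_neighborSet_sup_edge_le (H \ edge a y ⊔ edge u a) hvy w
  have h₂ := ncard_neighborSet_sup_edge_le (H \ edge a y) hua w
  have h₃ := ncard_neighborSet_sdiff_edge_add hay w
  unfold swapEdge
  split_ifs at h₁ h₂ h₃ ⊢ <;> omega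

/-- One more edge at `u` and one more at `v` (two at `u` if `u = v`) keep all degrees `≤ Δ`. -/
def HasRoom (H : SimpleGraph W) (Δ : ℕ) (u v : W) : Prop :=
  ∀ w, (H.neighborSet w).ncard + (if w = u then 1 else 0) + (if w = v then 1 else 0) ≤ Δ

lemma hasRoom_of_ne (hdeg : ∀ w, (H.neighborSet w).ncard ≤ Δ) (huv : u ≠ v)
    (hu : (H.neighborSet u).ncard < Δ) (hv : (H.neighborSet v).ncard < Δ) : HasRoom H Δ u v := by
  intro x
  have := hdeg x
  split_ifs <;> subst_vars <;> first | omega | exact absurd rfl huv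

lemma hasRoom_self (hdeg : ∀ w, (H.neighborSet w).ncard ≤ Δ)
    (hu : (H.neighborSet u).ncard + 2 ≤ Δ) : HasRoom H Δ u u := by
  intro x
  have := hdeg x
  split_ifs <;> subst_vars <;> omega

lemma ncard_closedNbhd_union_add_two_le [Finite W] (hroom : HasRoom H Δ u v)
    (hadj : u ≠ v → H.Adj u v) :
    (insert u (H.neighborSet u) ∪ insert v (H.neighborSet v)).ncard + 2 ≤ 2 * Δ := by
  have hu := hroom u
  have hv := hroom v
  have hins (x : W) : (insert x (H.neighborSet x)).ncard = (H.neighborSet x).ncard + 1 :=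
    Set.ncard_insert_of_notMem (H.notMem_neighborSet_self (a := x))
  rcases eq_or_ne u v with rfl | huv
  · simp only [if_true] at hu
    rw [Set.union_self, hins]
    omega
  · simp only [if_true, huv, huv.symm, if_false] at hu hv
    have hpair : {u, v} ⊆ insert u (H.neighborSet u) ∩ insert v (H.neighborSet v) := by
      simp [Set.insert_subset_iff, hadj huv, (hadj huv).symm]
    have h₂ := Set.ncard_le_ncard hpair
    rw [Set.ncard_pair huv] at h₂
    have := Set.ncard_union_add_ncard_inter (insert u (H.neighborSet u))
      (insert v (H.neighborSet v))
    rw [hins, hins] at this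
    omega

lemma sum_ncard_neighborSet_add_two_le (hroom : HasRoom H Δ u v) {S : Finset W} (hu : u ∈ S)
    (hv : v ∈ S) : ∑ s ∈ S, (H.neighborSet s).ncard + 2 ≤ Δ * #S := by
  have := Finset.sum_le_sum fun s (_ : s ∈ S) => hroom s
  simp only [Finset.sum_add_distrib, Finset.sum_ite_eq', hu, hv, if_true, Finset.sum_const,
    smul_eq_mul] at this
  linarith

end DegreeCount

section Handshake

variable [Fintype W] {H : SimpleGraph W}

lemma even_sum_ncard_neighborSet (H : SimpleGraph W) : Even (∑ w, (H.neighborSet w).ncard) := by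
  classical
  simp only [ncard_neighborSet_eq_degree, sum_degrees_eq_twice_card_edges, even_two_mul]

lemma even_sub_ncard_neighborSet {Δ : ℕ} {u : W} (hpar : Even (Δ * Fintype.card W))
    (hu : (H.neighborSet u).ncard ≤ Δ) (hfull : ∀ w ≠ u, (H.neighborSet w).ncard = Δ) :
    Even (Δ - (H.neighborSet u).ncard) := by
  classical
  have hsum : ∑ w, (H.neighborSet w).ncard =
      (H.neighborSet u).ncard + Δ * (Fintype.card W - 1) := by
    rw [← Finset.add_sum_erase _ _ (mem_univ u),
      Finset.sum_congr rfl fun w hw => hfull w (ne_of_mem_erase hw), sum_const,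
      card_erase_of_mem (mem_univ u), card_univ, smul_eq_mul, mul_comm]
  have hcard : Δ * Fintype.card W = Δ * (Fintype.card W - 1) + Δ := by
    rw [← Nat.mul_succ, Nat.succ_eq_add_one, Nat.sub_add_cancel (Fintype.card_pos_iff.2 ⟨u⟩)]
  have heven := H.even_sum_ncard_neighborSet
  rw [hsum] at heven
  rw [hcard] at hpar
  rw [Nat.even_iff] at heven hpar ⊢
  omega

lemma sum_ncard_neighborSet_le_of_subset {S T : Finset W} (hT : ∀ x ∈ T, H.neighborSet x ⊆ S) :
    ∑ x ∈ T, (H.neighborSet x).ncard ≤ ∑ s ∈ S, (H.neighborSet s).ncard := by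
  classical
  calc ∑ x ∈ T, (H.neighborSet x).ncard = ∑ x ∈ T, #(S.bipartiteAbove H.Adj x) := by
        refine sum_congr rfl fun x hx => ?_
        rw [← Set.ncard_coe_finset]
        congr 1
        ext y
        simpa [bipartiteAbove] using fun h => hT x hx h
    _ = ∑ s ∈ S, #(T.bipartiteBelow H.Adj s) :=
        sum_card_bipartiteAbove_eq_sum_card_bipartiteBelow _
    _ ≤ ∑ s ∈ S, (H.neighborSet s).ncard := by
        refine sum_le_sum fun s _ => ?_
        rw [← Set.ncard_coe_finset]
        exact Set.ncard_le_ncard fun x hx => by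
          simpa [bipartiteBelow] using (mem_filter.1 hx).2.symm

end Handshake

section Saturation

variable [Finite W] {G₀ H : SimpleGraph W} {Δ : ℕ}

lemma exists_maximalFor_boundedSupergraphs (hG₀ : ∀ w, (G₀.neighborSet w).ncard ≤ Δ) :
    ∃ H, MaximalFor (· ∈ boundedSupergraphs G₀ Δ) (fun H => H.edgeSet.ncard) H :=
  Set.Finite.exists_maximalFor _ _ (Set.toFinite _) ⟨G₀, le_rfl, hG₀⟩

variable [DecidableEq W]
  (hH : MaximalFor (· ∈ boundedSupergraphs G₀ Δ) (fun H => H.edgeSet.ncard) H)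
include hH

lemma adj_of_hasRoom {u v : W} (huv : u ≠ v) (hroom : HasRoom H Δ u v) : H.Adj u v := by
  by_contra hn
  have hmem : H ⊔ edge u v ∈ boundedSupergraphs G₀ Δ :=
    ⟨hH.1.1.trans le_sup_left, fun w => (ncard_neighborSet_sup_edge_le H huv w).trans (hroom w)⟩
  have := hH.2 hmem
  simp only [ncard_edgeSet_sup_edge huv hn] at this
  omega

lemma adj_or_adj_of_hasRoom {u v a y : W} (hroom : HasRoom H Δ u v) (hay : H.Adj a y)
    (hG₀ : ¬G₀.Adj a y) (hua : u ≠ a) (hvy : v ≠ y) (hne : s(u, a) ≠ s(v, y)) :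
    H.Adj u a ∨ H.Adj v y := by
  by_contra! hn
  have hmem : H.swapEdge a y u v ∈ boundedSupergraphs G₀ Δ :=
    ⟨(le_sdiff.2 ⟨hH.1.1, (disjoint_edge _).2 hG₀⟩).trans (le_sup_left.trans le_sup_left),
      fun w => (ncard_neighborSet_swapEdge_le hay hua hvy w).trans (hroom w)⟩
  have := hH.2 hmem
  simp only [ncard_edgeSet_swapEdge hay hn.1 hn.2 hua hvy hne] at this
  omega

lemma mem_closedNbhd_of_adj_of_hasRoom {u v x y : W} (hroom : HasRoom H Δ u v) (hxy : H.Adj x y)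
    (hG₀ : ¬G₀.Adj x y) (hx : ¬(x = u ∨ x = v ∨ H.Adj u x ∨ H.Adj v x)) :
    y = u ∨ y = v ∨ H.Adj u y ∨ H.Adj v y := by
  by_contra hy
  push Not at hx hy
  have hne : s(u, x) ≠ s(v, y) := by
    rw [Ne, Sym2.eq_iff]
    rintro (⟨-, rfl⟩ | ⟨rfl, -⟩)
    · exact hxy.ne rfl
    · exact hy.1 rfl
  rcases adj_or_adj_of_hasRoom hH hroom hxy hG₀ (Ne.symm hx.1) (Ne.symm hy.2.1) hne with h | h
  · exact hx.2.2.1 h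
  · exact hy.2.2.2 h

omit [Finite W] in
lemma exists_hasRoom [Fintype W] (hpar : Even (Δ * Fintype.card W)) {w₀ : W}
    (hw₀ : (H.neighborSet w₀).ncard < Δ) :
    ∃ u v, HasRoom H Δ u v ∧ (u ≠ v → H.Adj u v) ∧
      ∀ w, (H.neighborSet w).ncard < Δ → w = u ∨ H.Adj u w := by
  have hdeg := hH.1.2
  by_cases h : ∃ v ≠ w₀, (H.neighborSet v).ncard < Δ
  · obtain ⟨v, hv, hvΔ⟩ := h
    refine ⟨w₀, v, hasRoom_of_ne hdeg hv.symm hw₀ hvΔ,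
      fun hne => adj_of_hasRoom hH hne (hasRoom_of_ne hdeg hne hw₀ hvΔ), fun w hw => ?_⟩
    by_cases hw' : w = w₀
    · exact .inl hw'
    · exact .inr (adj_of_hasRoom hH (Ne.symm hw') (hasRoom_of_ne hdeg (Ne.symm hw') hw₀ hw))
  · push Not at h
    have heven := even_sub_ncard_neighborSet hpar (hdeg w₀)
      fun w hw => le_antisymm (hdeg w) (h w hw)
    have h₂ : (H.neighborSet w₀).ncard + 2 ≤ Δ := by
      obtain ⟨r, hr⟩ := heven
      omega
    refine ⟨w₀, w₀, hasRoom_self hdeg h₂, fun h => (h rfl).elim, fun w hw => .inl ?_⟩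
    by_contra hne
    exact (h w hne).not_gt hw

end Saturation

section Regular

variable [Fintype W] [DecidableEq W] {G₀ H : SimpleGraph W} {Δ : ℕ}

lemma forall_ncard_neighborSet_eq_of_maximalFor
    (hH : MaximalFor (· ∈ boundedSupergraphs G₀ Δ) (fun H => H.edgeSet.ncard) H)
    (hpar : Even (Δ * Fintype.card W)) (I : Finset W) (hI : ∀ a ∈ I, ∀ w, ¬G₀.Adj a w)
    (hcard : 4 * Δ ≤ #I + 4) (w : W) : (H.neighborSet w).ncard = Δ := by
  by_contra hw
  obtain ⟨u, v, hroom, hadj, hdef⟩ := exists_hasRoom hH hpar ((hH.1.2 w).lt_of_ne hw)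
  classical
  set S := univ.filter fun x => x = u ∨ x = v ∨ H.Adj u x ∨ H.Adj v x
  have hS_card : #S + 2 ≤ 2 * Δ := by
    have hS : (S : Set W) = insert u (H.neighborSet u) ∪ insert v (H.neighborSet v) := by
      ext x
      simp only [S, coe_filter, mem_univ, true_and, Set.mem_ofPred_eq, Set.mem_union,
        Set.mem_insert_iff, mem_neighborSet]
      tauto
    rw [← Set.ncard_coe_finset, hS]
    exact ncard_closedNbhd_union_add_two_le hroom hadj
  have hS_sum := sum_ncard_neighborSet_add_two_le hroom (S := S) (by simp [S]) (by simp [S])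
  have hclosed : ∀ x ∈ I \ S, H.neighborSet x ⊆ S := by
    intro x hx y hy
    simp only [S, mem_sdiff, mem_filter, mem_univ, true_and, coe_filter] at hx ⊢
    exact mem_closedNbhd_of_adj_of_hasRoom hH hroom hy (hI x hx.1 y) hx.2
  have hfull : ∀ x ∈ I \ S, (H.neighborSet x).ncard = Δ := by
    intro x hx
    by_contra hne
    have hxS := (mem_sdiff.1 hx).2
    rcases hdef x ((hH.1.2 x).lt_of_ne hne) with rfl | h <;> simp [S, *] at hxS
  have hcount : Δ * #(I \ S) + 2 ≤ Δ * #S :=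
    calc Δ * #(I \ S) + 2 = ∑ x ∈ I \ S, (H.neighborSet x).ncard + 2 := by
          rw [sum_congr rfl hfull, sum_const, smul_eq_mul, mul_comm]
      _ ≤ ∑ s ∈ S, (H.neighborSet s).ncard + 2 := by
          grw [sum_ncard_neighborSet_le_of_subset hclosed]
      _ ≤ Δ * #S := hS_sum
  have hlt : #(I \ S) < #S := Nat.lt_of_mul_lt_mul_left (by omega : Δ * #(I \ S) < Δ * #S)
  have := card_le_card_sdiff_add_card (s := I) (t := S)
  omega

theorem exists_le_forall_ncard_neighborSet_eq (hG₀ : ∀ w, (G₀.neighborSet w).ncard ≤ Δ)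
    (hpar : Even (Δ * Fintype.card W)) (I : Finset W) (hI : ∀ a ∈ I, ∀ w, ¬G₀.Adj a w)
    (hcard : 4 * Δ ≤ #I + 4) :
    ∃ H : SimpleGraph W, G₀ ≤ H ∧ ∀ w, (H.neighborSet w).ncard = Δ :=
  have ⟨H, hH⟩ := exists_maximalFor_boundedSupergraphs hG₀
  ⟨H, hH.1.1, forall_ncard_neighborSet_eq_of_maximalFor hH hpar I hI hcard⟩

end Regular

end SimpleGraph

open SimpleGraph

theorem stmt3 {V : Type} [Fintype V] (G : SimpleGraph V) [DecidableRel G.Adj]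
    (h : 1 ≤ G.maxDegree) :
    ∃ (W : Type) (H : SimpleGraph W) (f : V → W),
      Finite W ∧ Function.Injective f ∧
      (∀ v w, G.Adj v w → H.Adj (f v) (f w)) ∧
      (∀ w : W, (H.neighborSet w).ncard = G.maxDegree) ∧
      Nat.card W < Fintype.card V + 4 * G.maxDegree := by
  classical
  set Δ := G.maxDegree
  set m := 4 * (Δ - 1) + Fintype.card V % 2
  have hdeg : ∀ w, ((G ⊕g (⊥ : SimpleGraph (Fin m))).neighborSet w).ncard ≤ Δ := by
    rintro (a | i)
    · rw [neighborSet_sum_inl, Set.ncard_image_of_injective _ Sum.inl_injective,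
        ncard_neighborSet_eq_degree]
      exact G.degree_le_maxDegree a
    · simp [neighborSet_sum_inr]
  have hcard : Fintype.card (V ⊕ Fin m) = Fintype.card V + m := by simp
  have hpar : Even (Δ * Fintype.card (V ⊕ Fin m)) := (Nat.even_iff.2 (by omega)).mul_left Δ
  obtain ⟨H, hle, hreg⟩ := exists_le_forall_ncard_neighborSet_eq hdeg hpar (univ.map .inr)
    (by simp) (by rw [card_map, card_univ, Fintype.card_fin]; omega)
  refine ⟨V ⊕ Fin m, H, Sum.inl, inferInstance, Sum.inl_injective,
    fun v w hvw => hle (sum_adj_inl.2 hvw), hreg, ?_⟩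
  rw [Nat.card_eq_fintype_card, hcard]
  omega
end

section
/- For integers k ≥ 1 and β ≥ 2(k+1), with n_C(k,l) = (k!/(k-l+1)!)·(k-l+2) for 1 ≤ l ≤ k+1 and n_C(k,0)=1, and n_0 > 0, the sum n = ∑_{l=0}^{k+1} n_C(k,l)·n_0·β^{-l} satisfies n < n_0·β/(β-(k+1)) and n - n_0 < n_0·2(k+1)/β. -/
def nC (k l : ℕ) : ℕ :=
  if l = 0 then 1
  else if l ≤ k + 1 then (Nat.factorial k / Nat.factorial (k - l + 1)) * (k - l + 2)
  else 0

lemma nC_le (k l : ℕ) (hk : 1 ≤ k) : nC k l ≤ (k + 1) ^ l := by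
  unfold nC
  split_ifs with h1 h2
  · simp [h1]
  · have hl1 : 1 ≤ l := Nat.one_le_iff_ne_zero.mpr h1
    rcases Nat.lt_or_ge l (k + 1) with hl | hl
    · -- l ≤ k
      have hlk : l - 1 ≤ k := by omega
      have hdf : Nat.factorial k / Nat.factorial (k - l + 1) = k.descFactorial (l - 1) := by
        rw [Nat.descFactorial_eq_div hlk]
        congr 2
        omega
      rw [hdf]
      calc k.descFactorial (l - 1) * (k - l + 2)
          ≤ k ^ (l - 1) * (k + 1) := by
            exact Nat.mul_le_mul (Nat.descFactorial_le_pow k (l - 1)) (by omega)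
        _ ≤ (k + 1) ^ (l - 1) * (k + 1) := by
            exact Nat.mul_le_mul_right _ (Nat.pow_le_pow_left (Nat.le_succ k) _)
        _ = (k + 1) ^ l := by
            rw [← pow_succ]
            congr 1
            omega
    · -- l = k + 1
      have hlk : l = k + 1 := by omega
      subst hlk
      have h0 : k - (k + 1) + 1 = 1 := by omega
      have h2' : k - (k + 1) + 2 = 2 := by omega
      rw [h0, h2']
      rw [Nat.factorial_one, Nat.div_one]
      calc Nat.factorial k * 2 ≤ k ^ k * 2 := by
            have : Nat.factorial k = k.descFactorial k := (Nat.descFactorial_self k).symm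
            rw [this]
            exact Nat.mul_le_mul_right _ (Nat.descFactorial_le_pow k k)
        _ ≤ (k + 1) ^ k * (k + 1) := by
            exact Nat.mul_le_mul (Nat.pow_le_pow_left (Nat.le_succ k) _) (by omega)
        _ = (k + 1) ^ (k + 1) := (pow_succ _ _).symm
  · omega

theorem stmt13 (k β : ℕ) (hk : 1 ≤ k) (hβ : 2 * (k + 1) ≤ β) (n0 : ℝ) (hn0 : 0 < n0) :
    (∑ l ∈ Finset.range (k + 2), (nC k l : ℝ) * n0 * ((β : ℝ)⁻¹) ^ l)
        < n0 * β / (β - (k + 1)) ∧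
    (∑ l ∈ Finset.range (k + 2), (nC k l : ℝ) * n0 * ((β : ℝ)⁻¹) ^ l) - n0
        < n0 * (2 * (k + 1)) / β := by
  have hk2 : (2:ℝ) ≤ (k:ℝ) + 1 := by
    have : (1:ℝ) ≤ (k:ℝ) := by exact_mod_cast hk
    linarith
  have hB : 2 * ((k:ℝ) + 1) ≤ (β:ℝ) := by exact_mod_cast hβ
  set K : ℝ := (k:ℝ) + 1 with hKdef
  have hK0 : 0 < K := by linarith
  have hB0 : (0:ℝ) < β := by linarith
  have hKB : K < β := by linarith
  set r : ℝ := K * (β:ℝ)⁻¹ with hrdef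
  have hr0 : 0 < r := mul_pos hK0 (inv_pos.mpr hB0)
  have hr1 : r < 1 := by
    rw [hrdef, ← div_eq_mul_inv, div_lt_one hB0]; exact hKB
  have h1r : 0 < 1 - r := by linarith
  -- termwise bound
  have hterm : ∀ l, (nC k l : ℝ) * n0 * ((β : ℝ)⁻¹) ^ l ≤ n0 * r ^ l := by
    intro l
    have h1 : (nC k l : ℝ) ≤ K ^ l := by
      have h := nC_le k l hk
      have : (nC k l : ℝ) ≤ (((k+1) ^ l : ℕ) : ℝ) := by exact_mod_cast h
      calc (nC k l : ℝ) ≤ (((k+1) ^ l : ℕ) : ℝ) := this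
        _ = K ^ l := by push_cast [hKdef]; ring
    have hrl : r ^ l = K ^ l * ((β:ℝ)⁻¹) ^ l := by rw [hrdef, mul_pow]
    rw [hrl]
    have hb : (0:ℝ) ≤ ((β:ℝ)⁻¹) ^ l := by positivity
    calc (nC k l : ℝ) * n0 * ((β : ℝ)⁻¹) ^ l
        ≤ K ^ l * n0 * ((β : ℝ)⁻¹) ^ l := by
          apply mul_le_mul_of_nonneg_right _ hb
          exact mul_le_mul_of_nonneg_right h1 hn0.le
      _ = n0 * (K ^ l * ((β:ℝ)⁻¹) ^ l) := by ring
  -- geometric sum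
  have hgeom : ∀ n : ℕ, ∑ i ∈ Finset.range n, r ^ i = (1 - r ^ n) / (1 - r) := by
    intro n
    rw [geom_sum_eq (by linarith : r ≠ 1)]
    rw [div_eq_div_iff (by linarith) (by linarith)]
    ring
  have hgeom_lt : ∀ n : ℕ, ∑ i ∈ Finset.range n, r ^ i < (1 - r)⁻¹ := by
    intro n
    rw [hgeom n]
    rw [div_lt_iff₀ h1r, inv_mul_cancel₀ (ne_of_gt h1r)]
    have : 0 < r ^ n := pow_pos hr0 n
    linarith
  constructor
  · -- first bound
    have hsum : (∑ l ∈ Finset.range (k + 2), (nC k l : ℝ) * n0 * ((β : ℝ)⁻¹) ^ l)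
        ≤ n0 * ∑ l ∈ Finset.range (k + 2), r ^ l := by
      rw [Finset.mul_sum]
      exact Finset.sum_le_sum fun l _ => hterm l
    have h2 : n0 * ∑ l ∈ Finset.range (k + 2), r ^ l < n0 * (1 - r)⁻¹ :=
      (mul_lt_mul_iff_right₀ hn0).mpr (hgeom_lt _)
    have heq : n0 * (1 - r)⁻¹ = n0 * β / (β - K) := by
      rw [hrdef]
      rw [show (1 : ℝ) - K * (β:ℝ)⁻¹ = ((β:ℝ) - K) / β by field_simp]
      rw [inv_div]
      field_simp
    calc (∑ l ∈ Finset.range (k + 2), (nC k l : ℝ) * n0 * ((β : ℝ)⁻¹) ^ l)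
        ≤ n0 * ∑ l ∈ Finset.range (k + 2), r ^ l := hsum
      _ < n0 * (1 - r)⁻¹ := h2
      _ = n0 * β / (β - K) := heq
  · -- second bound
    have hsplit : (∑ l ∈ Finset.range (k + 2), (nC k l : ℝ) * n0 * ((β : ℝ)⁻¹) ^ l)
        = (∑ i ∈ Finset.range (k + 1), (nC k (i+1) : ℝ) * n0 * ((β : ℝ)⁻¹) ^ (i+1)) + n0 := by
      rw [Finset.sum_range_succ']
      congr 1
      simp [nC]
    rw [hsplit]
    have hsum2 : (∑ i ∈ Finset.range (k + 1), (nC k (i+1) : ℝ) * n0 * ((β : ℝ)⁻¹) ^ (i+1))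
        ≤ n0 * (r * ∑ i ∈ Finset.range (k + 1), r ^ i) := by
      rw [Finset.mul_sum, Finset.mul_sum]
      apply Finset.sum_le_sum
      intro i _
      calc (nC k (i+1) : ℝ) * n0 * ((β : ℝ)⁻¹) ^ (i+1) ≤ n0 * r ^ (i+1) := hterm (i+1)
        _ = n0 * (r * r ^ i) := by rw [pow_succ]; ring
    have h3 : r * ∑ i ∈ Finset.range (k + 1), r ^ i < r * (1 - r)⁻¹ :=
      (mul_lt_mul_iff_right₀ hr0).mpr (hgeom_lt _)
    have h4 : r * (1 - r)⁻¹ ≤ 2 * K / β := by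
      have hβK : 0 < (β:ℝ) - K := by linarith
      have heq2 : r * (1 - r)⁻¹ = K / ((β:ℝ) - K) := by
        rw [hrdef]
        rw [show (1 : ℝ) - K * (β:ℝ)⁻¹ = ((β:ℝ) - K) / β by field_simp]
        rw [inv_div]
        field_simp
      rw [heq2, div_le_div_iff₀ hβK hB0]
      nlinarith
    have : n0 * (r * ∑ i ∈ Finset.range (k + 1), r ^ i) < n0 * (2 * K / β) := by
      apply (mul_lt_mul_iff_right₀ hn0).mpr
      exact lt_of_lt_of_le h3 h4
    have hfin : (∑ i ∈ Finset.range (k + 1), (nC k (i+1) : ℝ) * n0 * ((β : ℝ)⁻¹) ^ (i+1))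
        < n0 * (2 * K / β) := lt_of_le_of_lt hsum2 this
    calc (∑ i ∈ Finset.range (k + 1), (nC k (i+1) : ℝ) * n0 * ((β : ℝ)⁻¹) ^ (i+1)) + n0 - n0
        = (∑ i ∈ Finset.range (k + 1), (nC k (i+1) : ℝ) * n0 * ((β : ℝ)⁻¹) ^ (i+1)) := by ring
      _ < n0 * (2 * K / β) := hfin
      _ = n0 * (2 * K) / β := by ring
end
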